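/- arXiv:2210.06539 — 4 statements merged into one kernel-verified Lean document; each statement's English description precedes it below -/
import Mathlib

section
/- Let d ≥ 1 be an integer, L > 0, σ > 0, and let f : ℝ^d → ℝ be measurable with 0 ≤ f(x) ≤ (L/2)‖x‖² for all x ∈ ℝ^d. Let π₀(x) = (2πσ²)^{-d/2} e^{-‖x‖²/(2σ²)} be the density of the Gaussian N(0, σ² I_d), let Z₁ = ∫_{ℝ^d} e^{-f(x) - ‖x‖²/(2σ²)} dx, and let π₁(x) = e^{-f(x) - ‖x‖²/(2σ²)} / Z₁. Then the overlap satisfies ∫_{ℝ^d} √(π₀(x) π₁(x)) dx ≥ (1 + σ²L/2)^{-d/2} ≥ e^{-σ² d L / 4}. In particular, if σ² = ε/(2dL) for some ε > 0, then ∫_{ℝ^d} √(π₀(x) π₁(x)) dx ≥ e^{-ε/8}. -/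
open MeasureTheory Real

private lemma integrable_rexp_neg_mul_sq_norm' {d : ℕ} {b : ℝ} (hb : 0 < b) :
    Integrable (fun x : EuclideanSpace ℝ (Fin d) => Real.exp (-b * ‖x‖ ^ 2)) := by
  have h := (GaussianFourier.integrable_cexp_neg_mul_sq_norm_add
    (V := EuclideanSpace ℝ (Fin d)) (b := (b : ℂ)) (by simpa using hb) 0 0).norm
  refine h.congr (Filter.Eventually.of_forall fun x => ?_)
  norm_num [Complex.norm_exp]
  left; norm_cast

/-- Overlap of the Gaussian `N(0, σ² I_d)` with the first annealing distribution
`π₁ ∝ e^{-f(x) - ‖x‖²/(2σ²)}`, where `0 ≤ f(x) ≤ (L/2)‖x‖²`. -/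
theorem stmt_0 (d : ℕ) (hd : 1 ≤ d) (L σ : ℝ) (hL : 0 < L) (hσ : 0 < σ)
    (f : EuclideanSpace ℝ (Fin d) → ℝ) (hf : Measurable f)
    (hf0 : ∀ x, 0 ≤ f x) (hfL : ∀ x, f x ≤ L / 2 * ‖x‖ ^ 2)
    (π₀ π₁ : EuclideanSpace ℝ (Fin d) → ℝ) (Z₁ : ℝ)
    (hπ₀ : ∀ x, π₀ x = (2 * π * σ ^ 2) ^ (-(d : ℝ) / 2) * Real.exp (-‖x‖ ^ 2 / (2 * σ ^ 2)))
    (hZ₁ : Z₁ = ∫ x : EuclideanSpace ℝ (Fin d), Real.exp (-f x - ‖x‖ ^ 2 / (2 * σ ^ 2)))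
    (hπ₁ : ∀ x, π₁ x = Real.exp (-f x - ‖x‖ ^ 2 / (2 * σ ^ 2)) / Z₁) :
    (∫ x : EuclideanSpace ℝ (Fin d), Real.sqrt (π₀ x * π₁ x))
        ≥ (1 + σ ^ 2 * L / 2) ^ (-(d : ℝ) / 2)
    ∧ (1 + σ ^ 2 * L / 2) ^ (-(d : ℝ) / 2) ≥ Real.exp (-(σ ^ 2 * d * L) / 4)
    ∧ ∀ ε : ℝ, 0 < ε → σ ^ 2 = ε / (2 * d * L) →
        (∫ x : EuclideanSpace ℝ (Fin d), Real.sqrt (π₀ x * π₁ x)) ≥ Real.exp (-ε / 8) := by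
  have hσ2 : (0:ℝ) < σ ^ 2 := by positivity
  set a0 : ℝ := (2 * σ ^ 2)⁻¹ with ha0def
  have ha0 : 0 < a0 := by positivity
  have ha1 : 0 < a0 + L / 2 := by positivity
  have ha2 : 0 < a0 + L / 4 := by positivity
  set e : ℝ := (d : ℝ) / 2 with hedef
  have hne : -e = -(d : ℝ) / 2 := by rw [hedef]; ring
  have hI : ∀ b : ℝ, 0 < b →
      (∫ x : EuclideanSpace ℝ (Fin d), Real.exp (-b * ‖x‖ ^ 2)) = (π / b) ^ e := by
    intro b hb
    rw [GaussianFourier.integral_rexp_neg_mul_sq_norm hb]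
    norm_num [hedef]
  -- integrability of the two f-dependent integrands
  have hint1 : Integrable (fun x : EuclideanSpace ℝ (Fin d) =>
      Real.exp (-f x - ‖x‖ ^ 2 / (2 * σ ^ 2))) := by
    refine (integrable_rexp_neg_mul_sq_norm' ha0).mono'
      ((hf.neg.sub ((measurable_norm.pow_const 2).div_const _)).exp).aestronglyMeasurable
      (Filter.Eventually.of_forall fun x => ?_)
    rw [Real.norm_eq_abs, Real.abs_exp, Real.exp_le_exp]
    have hx : ‖x‖ ^ 2 / (2 * σ ^ 2) = a0 * ‖x‖ ^ 2 := by rw [ha0def]; ring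
    rw [hx]; linarith [hf0 x]
  have hint2 : Integrable (fun x : EuclideanSpace ℝ (Fin d) =>
      Real.exp (-(f x) / 2 - a0 * ‖x‖ ^ 2)) := by
    refine (integrable_rexp_neg_mul_sq_norm' ha0).mono'
      (((hf.neg.div_const 2).sub ((measurable_norm.pow_const 2).const_mul a0)).exp).aestronglyMeasurable
      (Filter.Eventually.of_forall fun x => ?_)
    rw [Real.norm_eq_abs, Real.abs_exp, Real.exp_le_exp]
    linarith [hf0 x]
  -- bounds on Z₁
  have hZle : Z₁ ≤ (π / a0) ^ e := by
    rw [hZ₁, ← hI a0 ha0]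
    refine integral_mono hint1 (integrable_rexp_neg_mul_sq_norm' ha0) fun x => ?_
    rw [Real.exp_le_exp]
    have hx : ‖x‖ ^ 2 / (2 * σ ^ 2) = a0 * ‖x‖ ^ 2 := by rw [ha0def]; ring
    rw [hx]; linarith [hf0 x]
  have hZge : (π / (a0 + L / 2)) ^ e ≤ Z₁ := by
    rw [hZ₁, ← hI _ ha1]
    refine integral_mono (integrable_rexp_neg_mul_sq_norm' ha1) hint1 fun x => ?_
    rw [Real.exp_le_exp]
    have hx : ‖x‖ ^ 2 / (2 * σ ^ 2) = a0 * ‖x‖ ^ 2 := by rw [ha0def]; ring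
    rw [hx]
    nlinarith [hfL x]
  have hZpos : 0 < Z₁ :=
    lt_of_lt_of_le (Real.rpow_pos_of_pos (by positivity) e) hZge
  -- pointwise formula for the overlap integrand
  set C : ℝ := Real.sqrt ((2 * π * σ ^ 2) ^ (-(d : ℝ) / 2) / Z₁) with hCdef
  have hpt : ∀ x, Real.sqrt (π₀ x * π₁ x) = C * Real.exp (-(f x) / 2 - a0 * ‖x‖ ^ 2) := by
    intro x
    rw [hπ₀ x, hπ₁ x]
    have h1 : (2 * π * σ ^ 2) ^ (-(d : ℝ) / 2) * Real.exp (-‖x‖ ^ 2 / (2 * σ ^ 2)) *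
        (Real.exp (-f x - ‖x‖ ^ 2 / (2 * σ ^ 2)) / Z₁) =
        ((2 * π * σ ^ 2) ^ (-(d : ℝ) / 2) / Z₁) *
        (Real.exp (-‖x‖ ^ 2 / (2 * σ ^ 2)) * Real.exp (-f x - ‖x‖ ^ 2 / (2 * σ ^ 2))) := by
      ring
    rw [h1, ← Real.exp_add,
      Real.sqrt_mul (div_nonneg (Real.rpow_nonneg (by positivity) _) hZpos.le), ← Real.exp_half]
    rw [hCdef]
    congr 1
    rw [ha0def]; ring
  have hover : (∫ x : EuclideanSpace ℝ (Fin d), Real.sqrt (π₀ x * π₁ x)) =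
      C * ∫ x : EuclideanSpace ℝ (Fin d), Real.exp (-(f x) / 2 - a0 * ‖x‖ ^ 2) := by
    simp_rw [hpt]
    exact integral_const_mul C _
  have hJge : (π / (a0 + L / 4)) ^ e ≤
      ∫ x : EuclideanSpace ℝ (Fin d), Real.exp (-(f x) / 2 - a0 * ‖x‖ ^ 2) := by
    rw [← hI _ ha2]
    refine integral_mono (integrable_rexp_neg_mul_sq_norm' ha2) hint2 fun x => ?_
    rw [Real.exp_le_exp]
    nlinarith [hfL x]
  -- lower bound on C
  have h2pos : (0:ℝ) < 2 * π * σ ^ 2 := by positivity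
  have hpa0 : π / a0 = 2 * π * σ ^ 2 := by
    rw [ha0def]; field_simp
  have hypos : (0:ℝ) < (2 * π * σ ^ 2) ^ e := Real.rpow_pos_of_pos h2pos e
  have hCge : ((2 * π * σ ^ 2) ^ e)⁻¹ ≤ C := by
    have hstep : (2 * π * σ ^ 2) ^ (-(d : ℝ) / 2) / (π / a0) ^ e ≤
        (2 * π * σ ^ 2) ^ (-(d : ℝ) / 2) / Z₁ := by
      gcongr
    have heq : Real.sqrt ((2 * π * σ ^ 2) ^ (-(d : ℝ) / 2) / (π / a0) ^ e) =
        ((2 * π * σ ^ 2) ^ e)⁻¹ := by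
      rw [hpa0, ← hne, Real.rpow_neg h2pos.le]
      have hq : ∀ y : ℝ, y⁻¹ / y = (y ^ 2)⁻¹ := fun y => by
        rw [sq, mul_inv, div_eq_mul_inv]
      rw [hq, Real.sqrt_inv, Real.sqrt_sq hypos.le]
    calc ((2 * π * σ ^ 2) ^ e)⁻¹
        = Real.sqrt ((2 * π * σ ^ 2) ^ (-(d : ℝ) / 2) / (π / a0) ^ e) := heq.symm
      _ ≤ C := Real.sqrt_le_sqrt hstep
  have htpos : (0:ℝ) < 1 + σ ^ 2 * L / 2 := by positivity
  have hkey : ((2 * π * σ ^ 2) ^ e)⁻¹ * (π / (a0 + L / 4)) ^ e =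
      (1 + σ ^ 2 * L / 2) ^ (-(d : ℝ) / 2) := by
    have halg : (2 * π * σ ^ 2)⁻¹ * (π / (a0 + L / 4)) = (1 + σ ^ 2 * L / 2)⁻¹ := by
      rw [ha0def]
      have hπ0 : (π : ℝ) ≠ 0 := Real.pi_ne_zero
      field_simp
      ring
    rw [← Real.inv_rpow h2pos.le, ← Real.mul_rpow (by positivity) (by positivity), halg,
      Real.inv_rpow htpos.le, ← Real.rpow_neg htpos.le, hne]
  have part1 : (∫ x : EuclideanSpace ℝ (Fin d), Real.sqrt (π₀ x * π₁ x))
      ≥ (1 + σ ^ 2 * L / 2) ^ (-(d : ℝ) / 2) := by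
    rw [hover, ← hkey]
    exact mul_le_mul hCge hJge (Real.rpow_nonneg (by positivity) _) (Real.sqrt_nonneg _)
  have part2 : (1 + σ ^ 2 * L / 2) ^ (-(d : ℝ) / 2) ≥ Real.exp (-(σ ^ 2 * d * L) / 4) := by
    rw [Real.rpow_def_of_pos htpos, ge_iff_le, Real.exp_le_exp]
    have hlog : Real.log (1 + σ ^ 2 * L / 2) ≤ σ ^ 2 * L / 2 := by
      have := Real.log_le_sub_one_of_pos htpos
      linarith
    have hd0 : (0:ℝ) ≤ (d : ℝ) := Nat.cast_nonneg d
    nlinarith [mul_le_mul_of_nonneg_right hlog hd0]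
  refine ⟨part1, part2, fun ε hε hσε => ?_⟩
  have hdne : (d : ℝ) ≠ 0 := Nat.cast_ne_zero.2 (by omega)
  have : -(σ ^ 2 * d * L) / 4 = -ε / 8 := by
    rw [hσε]; field_simp; ring
  calc Real.exp (-ε / 8) = Real.exp (-(σ ^ 2 * d * L) / 4) := by rw [this]
    _ ≤ (1 + σ ^ 2 * L / 2) ^ (-(d : ℝ) / 2) := part2
    _ ≤ _ := part1
end

section
/- Let H be a complex Hilbert space and let T : H → H be a bounded self-adjoint linear operator. Let t ≥ 2 be an integer, let λ ∈ ℝ satisfy 1 − 1/t ≤ λ < 1, and let v ∈ H with T v = λ v and ‖v‖ = 1. Let u, w ∈ H and δ ≥ 0 be such that ⟨w, v⟩ = 0 and ‖T^t u − w‖ ≤ δ. Then |⟨u, v⟩| ≤ δ / λ^t ≤ 4δ. -/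
open MeasureTheory

lemma aux_pow_quarter (t : ℕ) (ht : 2 ≤ t) : (1/4 : ℝ) ≤ (1 - 1/(t:ℝ)) ^ t := by
  have ht' : (2:ℝ) ≤ t := by exact_mod_cast ht
  have ht0 : (0:ℝ) < t := by linarith
  have ha : (0:ℝ) ≤ 1 - 2/t := by
    have : (2:ℝ)/t ≤ 1 := (div_le_one ht0).mpr ht'
    linarith
  have hb : (0:ℝ) ≤ 2/t := by positivity
  have hab : (1 - 2/(t:ℝ)) + 2/t = 1 := by ring
  have hconv := convexOn_exp.2 (Set.mem_univ (0:ℝ)) (Set.mem_univ (-Real.log 2)) ha hb hab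
  have h2 : Real.exp (-Real.log 2) = 1/2 := by
    rw [Real.exp_neg, Real.exp_log] <;> norm_num
  have hlog4 : Real.log 4 = 2 * Real.log 2 := by
    rw [show (4:ℝ) = 2^2 by norm_num, Real.log_pow]; push_cast; ring
  have harg : (1 - 2/(t:ℝ)) • (0:ℝ) + (2/(t:ℝ)) • (-Real.log 2) = -(Real.log 4)/t := by
    simp only [smul_eq_mul, hlog4]; ring
  rw [harg, Real.exp_zero, h2, smul_eq_mul, smul_eq_mul] at hconv
  have hexp : Real.exp (-(Real.log 4)/t) ≤ 1 - 1/(t:ℝ) := by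
    calc Real.exp (-(Real.log 4)/t) ≤ (1 - 2/t) * 1 + 2/t * (1/2) := hconv
      _ = 1 - 1/t := by ring
  have hpos : (0:ℝ) ≤ Real.exp (-(Real.log 4)/t) := (Real.exp_pos _).le
  calc (1/4 : ℝ) = Real.exp (-(Real.log 4)/t) ^ t := by
        rw [← Real.exp_nat_mul]
        rw [show (t:ℝ) * (-(Real.log 4)/t) = -Real.log 4 by field_simp]
        rw [Real.exp_neg, Real.exp_log] <;> norm_num
    _ ≤ (1 - 1/(t:ℝ)) ^ t := pow_le_pow_left₀ hpos hexp t

/-- Abstract form of the effective-spectral-gap overlap bound: if `T` is self-adjoint,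
`v` a unit eigenvector with eigenvalue `λ ∈ [1 − 1/t, 1)`, `w ⊥ v`, and `‖T^t u − w‖ ≤ δ`,
then `|⟨u, v⟩| ≤ δ/λ^t ≤ 4δ` (using `(1 − 1/t)^t ≥ 1/4` for integers `t ≥ 2`). -/
theorem stmt_9 {H : Type*} [NormedAddCommGroup H] [InnerProductSpace ℂ H] [CompleteSpace H]
    (T : H →L[ℂ] H) (hT : IsSelfAdjoint T)
    (t : ℕ) (ht : 2 ≤ t) (l : ℝ) (hl1 : 1 - 1 / (t : ℝ) ≤ l) (hl2 : l < 1)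
    (v : H) (hv : T v = (l : ℂ) • v) (hvnorm : ‖v‖ = 1)
    (u w : H) (δ : ℝ) (hδ : 0 ≤ δ)
    (hw : (inner ℂ w v : ℂ) = 0) (hTu : ‖(T ^ t) u - w‖ ≤ δ) :
    ‖(inner ℂ u v : ℂ)‖ ≤ δ / l ^ t ∧ δ / l ^ t ≤ 4 * δ := by
  have ht' : (2:ℝ) ≤ t := by exact_mod_cast ht
  have ht0 : (0:ℝ) < t := by linarith
  have hsub : (0:ℝ) ≤ 1 - 1/t := by
    have : (1:ℝ)/t ≤ 1 := by rw [div_le_one ht0]; linarith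
    linarith
  have hl0 : (0:ℝ) < l := by
    have h12 : (1:ℝ)/t ≤ 1/2 := by
      rw [div_le_div_iff₀ ht0 (by norm_num)]; linarith
    linarith
  have hquarter : (1/4 : ℝ) ≤ l ^ t :=
    le_trans (aux_pow_quarter t ht) (pow_le_pow_left₀ hsub hl1 t)
  have hltpos : (0:ℝ) < l ^ t := lt_of_lt_of_le (by norm_num) hquarter
  have hpow : ∀ n : ℕ, (T ^ n) v = ((l : ℂ) ^ n) • v := by
    intro n
    induction n with
    | zero => simp
    | succ n ih =>
      rw [pow_succ, ContinuousLinearMap.mul_apply, hv, _root_.map_smul, ih, smul_smul, ← pow_succ']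
  have hsym : (inner ℂ ((T ^ t) u) v : ℂ) = inner ℂ u ((T ^ t) v) := (hT.pow t).isSymmetric u v
  have key : (inner ℂ ((T ^ t) u - w) v : ℂ) = (l : ℂ) ^ t * inner ℂ u v := by
    rw [inner_sub_left, hw, sub_zero, hsym, hpow t, inner_smul_right]
  have hbound : l ^ t * ‖(inner ℂ u v : ℂ)‖ ≤ δ := by
    have h1 : ‖(inner ℂ ((T ^ t) u - w) v : ℂ)‖ ≤ δ := by
      calc ‖(inner ℂ ((T ^ t) u - w) v : ℂ)‖ ≤ ‖(T ^ t) u - w‖ * ‖v‖ := norm_inner_le_norm _ _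
        _ ≤ δ := by rw [hvnorm, mul_one]; exact hTu
    rw [key, norm_mul, norm_pow, Complex.norm_real, Real.norm_eq_abs, abs_of_pos hl0] at h1
    exact h1
  constructor
  · rw [le_div_iff₀ hltpos, mul_comm]; exact hbound
  · rw [div_le_iff₀ hltpos]
    calc δ = 4 * δ * (1/4) := by ring
      _ ≤ 4 * δ * l ^ t := mul_le_mul_of_nonneg_left hquarter (by linarith)
end

section
/- Let H and K be complex Hilbert spaces, let T : H → K be a linear isometry, and let S : K → K be a unitary operator with S² = I. Define the quantum walk operator W = S(2TT* − I) on K, where T* is the adjoint of T. Suppose v ∈ H satisfies ‖v‖ = 1 and T* S T v = λ v for some real λ with |λ| < 1, and set μ = λ + i√(1 − λ²). Then W(Tv) = S T v, W(S T v) = 2λ (S T v) − T v, the vectors T v and S T v are linearly independent, and W has eigenvalues μ and μ̄ on span{Tv, STv}: explicitly, W(STv − μ̄ Tv) = μ (STv − μ̄ Tv) and W(STv − μ Tv) = μ̄ (STv − μ Tv). -/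
open ContinuousLinearMap

/-- Spectral correspondence of the quantum walk operator `W = S(2TT* − I)`: for a linear
isometry `T`, a self-inverse unitary `S`, and a unit vector `v` with `T*STv = λv`,
`|λ| < 1`, the walk operator acts on `span{Tv, STv}` with eigenvalues
`μ = λ + i√(1−λ²)` and `μ̄`. -/
theorem stmt_11 {H K : Type*}
    [NormedAddCommGroup H] [InnerProductSpace ℂ H] [CompleteSpace H]
    [NormedAddCommGroup K] [InnerProductSpace ℂ K] [CompleteSpace K]
    (T : H →L[ℂ] K) (hT : ∀ x, ‖T x‖ = ‖x‖)
    (S : K →L[ℂ] K)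
    (hS_unitary : S * adjoint S = 1 ∧ adjoint S * S = 1)
    (hS2 : S * S = 1)
    (W : K →L[ℂ] K)
    (hW : W = S ∘L ((2 : ℂ) • (T ∘L adjoint T) - 1))
    (v : H) (hvnorm : ‖v‖ = 1) (l : ℝ) (hl : |l| < 1)
    (hv : adjoint T (S (T v)) = (l : ℂ) • v)
    (μ : ℂ) (hμ : μ = (l : ℂ) + Complex.I * (Real.sqrt (1 - l ^ 2) : ℝ)) :
    W (T v) = S (T v)
    ∧ W (S (T v)) = ((2 * l : ℝ) : ℂ) • S (T v) - T v
    ∧ LinearIndependent ℂ ![T v, S (T v)]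
    ∧ W (S (T v) - (starRingEnd ℂ μ) • T v) = μ • (S (T v) - (starRingEnd ℂ μ) • T v)
    ∧ W (S (T v) - μ • T v) = (starRingEnd ℂ μ) • (S (T v) - μ • T v) := by
  -- T is a linear isometry
  set Ti : H →ₗᵢ[ℂ] K := ⟨(T : H →ₗ[ℂ] K), hT⟩ with hTi
  have hTT : ∀ x : H, adjoint T (T x) = x := by
    intro x
    apply ext_inner_left ℂ
    intro w
    rw [adjoint_inner_right]
    exact Ti.inner_map_map w x
  have hSS : ∀ x : K, S (S x) = x := by
    intro x
    have := congrArg (fun A => A x) hS2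
    simpa using this
  -- W action on Tv
  have hW1 : W (T v) = S (T v) := by
    rw [hW]
    simp [comp_apply, sub_apply, smul_apply, hTT, two_smul]
  -- W action on STv
  have hW2 : W (S (T v)) = ((2 * l : ℝ) : ℂ) • S (T v) - T v := by
    rw [hW]
    simp only [comp_apply, sub_apply, smul_apply, one_apply, hv, map_smul, map_sub]
    rw [ContinuousLinearMap.one_apply, hSS]
    push_cast
    module
  have hTv0 : T v ≠ 0 := by
    intro h
    have := hT v
    rw [h, hvnorm] at this
    simp at this
  -- inner product ⟪Tv, STv⟫ = l
  have hinner : inner ℂ (T v) (S (T v)) = (l : ℂ) := by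
    have h1 : inner ℂ v (adjoint T (S (T v))) = (inner ℂ (T v) (S (T v)) : ℂ) :=
      adjoint_inner_right T _ _
    rw [hv] at h1
    rw [← h1, inner_smul_right]
    have h2 : (inner ℂ v v : ℂ) = ((‖v‖ : ℂ))^2 := by
      rw [inner_self_eq_norm_sq_to_K]; norm_num
    rw [h2, hvnorm]
    simp
  have hTvTv : (inner ℂ (T v) (T v) : ℂ) = 1 := by
    rw [inner_self_eq_norm_sq_to_K, hT, hvnorm]
    simp
  have hl2 : l ^ 2 < 1 := by
    have := abs_lt.mp hl
    nlinarith
  have hlin : LinearIndependent ℂ ![T v, S (T v)] := by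
    refine linearIndependent_fin2.mpr ⟨?_, ?_⟩ <;>
      simp only [Matrix.cons_val_one, Matrix.head_cons, Matrix.cons_val_zero]
    · intro h
      apply hTv0
      rw [← hSS (T v), h, map_zero]
    · intro a ha
      -- a • S(Tv) = Tv
      have h1 : (inner ℂ (T v) (a • S (T v)) : ℂ) = inner ℂ (T v) (T v) := by rw [ha]
      rw [inner_smul_right, hinner, hTvTv] at h1
      -- apply S : a • Tv = S(Tv), so inner Tv STv = a
      have h2 : a • T v = S (T v) := by
        have h := congrArg S ha
        rwa [map_smul, hSS] at h
      have h3 : (inner ℂ (T v) (S (T v)) : ℂ) = a := by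
        rw [← h2, inner_smul_right, hTvTv, mul_one]
      rw [hinner] at h3
      -- so a = l and a * l = 1, giving l^2 = 1
      rw [← h3] at h1
      have : (l : ℂ) ^ 2 = 1 := by rw [sq]; exact h1
      have : (l : ℝ) ^ 2 = 1 := by exact_mod_cast this
      linarith
  -- arithmetic facts about μ
  have hs2 : (Real.sqrt (1 - l ^ 2)) ^ 2 = 1 - l ^ 2 := Real.sq_sqrt (by linarith)
  have hconj : starRingEnd ℂ μ = (l : ℂ) - Complex.I * (Real.sqrt (1 - l ^ 2) : ℝ) := by
    rw [hμ]
    simp [map_add, map_mul, Complex.conj_I, Complex.conj_ofReal]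
    ring
  have hsum : μ + starRingEnd ℂ μ = ((2 * l : ℝ) : ℂ) := by
    rw [hconj, hμ]; push_cast; ring
  have hsq : ((Real.sqrt (1 - l ^ 2) : ℝ) : ℂ) ^ 2 = 1 - (l : ℂ) ^ 2 := by
    rw [← Complex.ofReal_pow, hs2]; push_cast; ring
  have hprod : μ * starRingEnd ℂ μ = 1 := by
    rw [hconj, hμ]
    have : ((l : ℂ) + Complex.I * (Real.sqrt (1 - l ^ 2) : ℝ)) *
        ((l : ℂ) - Complex.I * (Real.sqrt (1 - l ^ 2) : ℝ))
        = (l : ℂ) ^ 2 - Complex.I ^ 2 * ((Real.sqrt (1 - l ^ 2) : ℝ) : ℂ) ^ 2 := by ring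
    rw [this, Complex.I_sq, hsq]
    ring
  have key : ∀ c : ℂ, W (S (T v) - c • T v)
      = ((2 * l : ℝ) : ℂ) • S (T v) - T v - c • S (T v) := by
    intro c
    rw [map_sub, map_smul, hW1, hW2]
  refine ⟨hW1, hW2, hlin, ?_, ?_⟩
  · rw [key, smul_sub, smul_smul, hprod, ← hsum]
    module
  · rw [key, smul_sub, smul_smul, mul_comm (starRingEnd ℂ μ) μ, hprod, ← hsum]
    module
end

section
/- Let d ≥ 1 be an integer, L > 0, 0 < ε < 1, and set σ² = ε/(2dL). Let f : ℝ^d → ℝ be measurable with 0 ≤ f(x) ≤ (L/2)‖x‖² for all x ∈ ℝ^d, and let Z₁ = ∫_{ℝ^d} e^{-f(x) - ‖x‖²/(2σ²)} dx. Then (1 − ε/2) (2πσ²)^{d/2} ≤ Z₁ ≤ (2πσ²)^{d/2}. -/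
open MeasureTheory Real

lemma aux_integrable_rexp {d : ℕ} {b : ℝ} (hb : 0 < b) :
    Integrable (fun v : EuclideanSpace ℝ (Fin d) ↦ Real.exp (-b * ‖v‖ ^ 2)) := by
  have h := (GaussianFourier.integrable_cexp_neg_mul_sq_norm_add
    (b := (b : ℂ)) (by simpa using hb) 0 (0 : EuclideanSpace ℝ (Fin d))).norm
  simpa [Complex.norm_exp, ← Complex.ofReal_pow] using h

lemma aux_integral_rexp {d : ℕ} {b : ℝ} (hb : 0 < b) :
    (∫ v : EuclideanSpace ℝ (Fin d), Real.exp (-b * ‖v‖ ^ 2)) = (π / b) ^ ((d : ℝ) / 2) := by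
  rw [GaussianFourier.integral_rexp_neg_mul_sq_norm hb]
  norm_num [finrank_euclideanSpace]

/-- With `σ² = ε/(2dL)` (denoted `s`), the normalizing constant
`Z₁ = ∫ e^{-f(x) - ‖x‖²/(2σ²)} dx` of the first annealing distribution is within relative
error `ε/2` of the Gaussian normalizing constant `(2πσ²)^{d/2}`, provided
`0 ≤ f(x) ≤ (L/2)‖x‖²`. -/
theorem stmt_12 (d : ℕ) (hd : 1 ≤ d) (L ε s : ℝ) (hL : 0 < L) (hε0 : 0 < ε) (hε1 : ε < 1)
    (hs : s = ε / (2 * d * L))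
    (f : EuclideanSpace ℝ (Fin d) → ℝ) (hf : Measurable f)
    (hf0 : ∀ x, 0 ≤ f x) (hfL : ∀ x, f x ≤ L / 2 * ‖x‖ ^ 2)
    (Z₁ : ℝ)
    (hZ₁ : Z₁ = ∫ x : EuclideanSpace ℝ (Fin d), Real.exp (-f x - ‖x‖ ^ 2 / (2 * s))) :
    (1 - ε / 2) * (2 * π * s) ^ ((d : ℝ) / 2) ≤ Z₁
    ∧ Z₁ ≤ (2 * π * s) ^ ((d : ℝ) / 2) := by
  have hdpos : (0 : ℝ) < d := by exact_mod_cast hd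
  have hs0 : 0 < s := by
    rw [hs]; positivity
  set b : ℝ := 1 / (2 * s) with hb_def
  have hb : 0 < b := by positivity
  set b' : ℝ := b + L / 2 with hb'_def
  have hb' : 0 < b' := by positivity
  -- rewrite integrand
  have hintegrand : ∀ x : EuclideanSpace ℝ (Fin d),
      Real.exp (-f x - ‖x‖ ^ 2 / (2 * s)) = Real.exp (-f x - b * ‖x‖ ^ 2) := by
    intro x
    rw [hb_def]
    ring_nf
  -- pointwise bounds
  have hub : ∀ x : EuclideanSpace ℝ (Fin d),
      Real.exp (-f x - b * ‖x‖ ^ 2) ≤ Real.exp (-b * ‖x‖ ^ 2) := by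
    intro x
    apply Real.exp_le_exp.2
    have := hf0 x
    nlinarith
  have hlb : ∀ x : EuclideanSpace ℝ (Fin d),
      Real.exp (-b' * ‖x‖ ^ 2) ≤ Real.exp (-f x - b * ‖x‖ ^ 2) := by
    intro x
    apply Real.exp_le_exp.2
    have := hfL x
    rw [hb'_def]
    nlinarith
  have hib : Integrable (fun v : EuclideanSpace ℝ (Fin d) ↦ Real.exp (-b * ‖v‖ ^ 2)) :=
    aux_integrable_rexp hb
  have hib' : Integrable (fun v : EuclideanSpace ℝ (Fin d) ↦ Real.exp (-b' * ‖v‖ ^ 2)) :=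
    aux_integrable_rexp hb'
  have hmeas : AEStronglyMeasurable
      (fun x : EuclideanSpace ℝ (Fin d) ↦ Real.exp (-f x - b * ‖x‖ ^ 2)) volume := by
    refine Measurable.aestronglyMeasurable ?_
    exact (((hf.neg).sub ((measurable_norm.pow_const 2).const_mul b)).exp)
  have hiZ : Integrable (fun x : EuclideanSpace ℝ (Fin d) ↦ Real.exp (-f x - b * ‖x‖ ^ 2)) := by
    refine hib.mono hmeas ?_
    filter_upwards with x
    rw [Real.norm_eq_abs, Real.norm_eq_abs, abs_of_pos (Real.exp_pos _),
      abs_of_pos (Real.exp_pos _)]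
    exact hub x
  have hZeq : Z₁ = ∫ x : EuclideanSpace ℝ (Fin d), Real.exp (-f x - b * ‖x‖ ^ 2) := by
    rw [hZ₁]
    exact integral_congr_ae (Filter.Eventually.of_forall hintegrand)
  -- key equalities
  have hpb : π / b = 2 * π * s := by
    rw [hb_def]; field_simp
  have hLs : L * s = ε / (2 * d) := by
    rw [hs]; field_simp
  have hpb' : π / b' = (2 * π * s) / (1 + L * s) := by
    rw [hb'_def, hb_def]
    have h1 : (0:ℝ) < 1 + L * s := by positivity
    field_simp
  -- upper bound
  have hupper : Z₁ ≤ (2 * π * s) ^ ((d : ℝ) / 2) := by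
    rw [hZeq, ← hpb, ← aux_integral_rexp hb]
    exact integral_mono hiZ hib hub
  refine ⟨?_, hupper⟩
  -- lower bound
  have hlower : (π / b') ^ ((d : ℝ) / 2) ≤ Z₁ := by
    rw [hZeq, ← aux_integral_rexp hb']
    exact integral_mono hib' hiZ hlb
  refine le_trans ?_ hlower
  rw [hpb']
  -- scalar inequality : (1 - ε/2) * X ≤ X / (1+Ls)^{d/2}
  have hX : (0:ℝ) < (2 * π * s) ^ ((d : ℝ) / 2) := by
    apply Real.rpow_pos_of_pos; positivity
  have h1Ls : (0:ℝ) < 1 + L * s := by positivity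
  rw [Real.div_rpow (by positivity) (le_of_lt h1Ls)]
  rw [le_div_iff₀ (Real.rpow_pos_of_pos h1Ls _)]
  have hkey : (1 - ε / 2) * (1 + L * s) ^ ((d : ℝ) / 2) ≤ 1 := by
    have h1 : (1 + L * s) ^ ((d : ℝ) / 2) ≤ Real.exp (ε / 4) := by
      calc (1 + L * s) ^ ((d : ℝ) / 2) ≤ (Real.exp (L * s)) ^ ((d : ℝ) / 2) := by
            apply Real.rpow_le_rpow (le_of_lt h1Ls) ?_ (by positivity)
            have := Real.add_one_le_exp (L * s); linarith
          _ = Real.exp (L * s * ((d : ℝ) / 2)) := (Real.exp_mul _ _).symm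
          _ = Real.exp (ε / 4) := by
            rw [hLs]; congr 1; field_simp; ring
    have h2 : 1 - ε / 2 ≤ Real.exp (-(ε / 2)) := by
      have := Real.add_one_le_exp (-(ε / 2)); linarith
    have h3 : 0 < 1 - ε / 2 := by linarith
    calc (1 - ε / 2) * (1 + L * s) ^ ((d : ℝ) / 2)
        ≤ Real.exp (-(ε / 2)) * Real.exp (ε / 4) := by
          apply mul_le_mul h2 h1 (by positivity) (le_of_lt (Real.exp_pos _))
      _ = Real.exp (-(ε / 4)) := by rw [← Real.exp_add]; ring_nf
      _ ≤ 1 := Real.exp_le_one_iff.mpr (by linarith)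
  nlinarith [Real.rpow_pos_of_pos h1Ls ((d:ℝ)/2), hX]
end
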